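/- arXiv:1906.00395 — 2 statements merged into one kernel-verified Lean document; each statement's English description precedes it below -/
import Mathlib

section
/- Let (X, p) be a partial metric space with associated G-metric G_p. For a sequence {x_n} and a point x ∈ X: lim_{n,m→∞} G_p(x, x_n, x_m) = 0 if and only if p(x,x) = lim_{n,m→∞} p(x_n, x_m) = lim_{n→∞} p(x_n, x_n) = lim_{n→∞} p(x, x_n). -/
open Filter Topology

/-- A partial metric (Matthews): P1–P4, nonnegative real-valued. -/
def IsPartialMetric {X : Type*} (p : X → X → ℝ) : Prop :=
  (∀ x y, 0 ≤ p x y) ∧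
  (∀ x y, x = y ↔ (p x x = p x y ∧ p x y = p y y)) ∧
  (∀ x y, p x x ≤ p x y) ∧
  (∀ x y, p x y = p y x) ∧
  (∀ x y z, p x z ≤ p x y + p y z - p y y)

/-- A G-metric (Mustafa–Sims): G1–G5, nonnegative real-valued. -/
def IsGMetric {X : Type*} (G : X → X → X → ℝ) : Prop :=
  (∀ x y z, 0 ≤ G x y z) ∧
  (∀ x, G x x x = 0) ∧
  (∀ x y, x ≠ y → 0 < G x x y) ∧
  (∀ x y z, z ≠ y → G x x y ≤ G x y z) ∧
  (∀ x y z, G x y z = G y x z ∧ G x y z = G x z y) ∧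
  (∀ x y z a, G x y z ≤ G x a a + G a y z)

/-- A GP-metric (Zand–Nezhad): GP1–GP4, nonnegative real-valued. -/
def IsGPMetric {X : Type*} (G : X → X → X → ℝ) : Prop :=
  (∀ x y z, 0 ≤ G x y z) ∧
  (∀ x y z, G x x x ≤ G x x y ∧ G x x y ≤ G x y z) ∧
  (∀ x y z, G x y z = G y x z ∧ G x y z = G x z y) ∧
  (∀ x y z a, G x y z ≤ G x a a + G a y z - G a a a) ∧
  (∀ x y z, G x y z = G x x x → G x y z = G y y y → G x y z = G z z z → x = y ∧ y = z)

/-- Cauchy sequence in a partial metric space: lim_{n,m} p(x_n,x_m) exists (finite). -/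
def PCauchy {X : Type*} (p : X → X → ℝ) (s : ℕ → X) : Prop :=
  ∃ a : ℝ, Tendsto (fun nm : ℕ × ℕ => p (s nm.1) (s nm.2)) atTop (nhds a)

/-- Completeness of a partial metric space. -/
def PComplete {X : Type*} (p : X → X → ℝ) : Prop :=
  ∀ s : ℕ → X, PCauchy p s → ∃ x : X,
    Tendsto (fun nm : ℕ × ℕ => p (s nm.1) (s nm.2)) atTop (nhds (p x x))

/-- G-Cauchy sequence in a G-metric space. -/
def GCauchy {X : Type*} (G : X → X → X → ℝ) (s : ℕ → X) : Prop :=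
  ∀ ε : ℝ, 0 < ε → ∃ k : ℕ, ∀ n ≥ k, ∀ m ≥ k, ∀ l ≥ k, G (s n) (s m) (s l) < ε

/-- G-convergence in a G-metric space. -/
def GConvergesTo {X : Type*} (G : X → X → X → ℝ) (s : ℕ → X) (x : X) : Prop :=
  ∀ ε : ℝ, 0 < ε → ∃ k : ℕ, ∀ n ≥ k, ∀ m ≥ k, G x (s n) (s m) < ε

/-- G-completeness. -/
def GComplete {X : Type*} (G : X → X → X → ℝ) : Prop :=
  ∀ s : ℕ → X, GCauchy G s → ∃ x : X, GConvergesTo G s x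

/-- GP-Cauchy sequence: lim_{n,m} GP(x_n,x_m,x_m) exists (finite). -/
def GPCauchy {X : Type*} (G : X → X → X → ℝ) (s : ℕ → X) : Prop :=
  ∃ a : ℝ, Tendsto (fun nm : ℕ × ℕ => G (s nm.1) (s nm.2) (s nm.2)) atTop (nhds a)

/-- GP-convergence of a sequence to a point. -/
def GPConvergesTo {X : Type*} (G : X → X → X → ℝ) (s : ℕ → X) (x : X) : Prop :=
  Tendsto (fun n => G (s n) (s n) (s n)) atTop (nhds (G x x x)) ∧
  Tendsto (fun n => G x x (s n)) atTop (nhds (G x x x))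

/-- GP-completeness. -/
def GPComplete {X : Type*} (G : X → X → X → ℝ) : Prop :=
  ∀ s : ℕ → X, GPCauchy G s → ∃ x : X, GPConvergesTo G s x ∧
    Tendsto (fun nm : ℕ × ℕ => G (s nm.1) (s nm.2) (s nm.2)) atTop (nhds (G x x x))

/-- The topology generated by the open GP-balls. -/
def GPTopology {X : Type*} (G : X → X → X → ℝ) : TopologicalSpace X :=
  TopologicalSpace.generateFrom
    { s | ∃ (x₀ : X) (ε : ℝ), 0 < ε ∧ s = { y | G x₀ y y < ε + G x₀ x₀ x₀ } }

/-!
`G_p(x, y, z) = (p(x,y) - p(x,x)) + (p(y,z) - p(y,y)) + (p(x,z) - p(z,z))` is a sum of terms that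
are nonnegative by P2. Hence `G_p(x, x_n, x_m) → 0` forces `p(x, x_n) → p(x, x)` and
`p(x_n, x_m) - p(x_n, x_n) → 0`, and on the diagonal `G_p(x, x_n, x_n) = 2 p(x, x_n) - p(x, x) -
p(x_n, x_n)` then gives `p(x_n, x_n) → p(x, x)`. The converse is continuity of the formula for `G_p`.
-/

theorem Filter.Tendsto.comp_fst_atTop {α β γ : Type*} [Preorder α] [Preorder β] {f : α → γ}
    {l : Filter γ} (h : Tendsto f atTop l) :
    Tendsto (fun ab : α × β => f ab.1) atTop l := by
  rw [← prod_atTop_atTop_eq]; exact h.comp tendsto_fst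

theorem Filter.Tendsto.comp_snd_atTop {α β γ : Type*} [Preorder α] [Preorder β] {f : β → γ}
    {l : Filter γ} (h : Tendsto f atTop l) :
    Tendsto (fun ab : α × β => f ab.2) atTop l := by
  rw [← prod_atTop_atTop_eq]; exact h.comp tendsto_snd

section PartialMetricG

variable {X : Type*} {p : X → X → ℝ}

theorem IsPartialMetric.self_le_left (hp : IsPartialMetric p) (x y : X) : p x x ≤ p x y :=
  hp.2.2.1 x y

theorem IsPartialMetric.self_le_right (hp : IsPartialMetric p) (x y : X) : p y y ≤ p x y :=
  hp.2.2.2.1 x y ▸ hp.self_le_left y x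

def partialMetricG (p : X → X → ℝ) (x y z : X) : ℝ :=
  p x y + p y z + p x z - p x x - p y y - p z z

theorem partialMetricG_eq_add (x y z : X) :
    partialMetricG p x y z = (p x y - p x x) + (p y z - p y y) + (p x z - p z z) := by
  unfold partialMetricG; ring

theorem partialMetricG_self_right (x y : X) :
    partialMetricG p x y y = 2 * p x y - p x x - p y y := by
  unfold partialMetricG; ring

theorem IsPartialMetric.sub_self_le_partialMetricG_left (hp : IsPartialMetric p) (x y z : X) :
    p x y - p x x ≤ partialMetricG p x y z := by
  rw [partialMetricG_eq_add]
  linarith [hp.self_le_left y z, hp.self_le_right x z]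

theorem IsPartialMetric.sub_self_le_partialMetricG_middle (hp : IsPartialMetric p) (x y z : X) :
    p y z - p y y ≤ partialMetricG p x y z := by
  rw [partialMetricG_eq_add]
  linarith [hp.self_le_left x y, hp.self_le_right x z]

variable {s : ℕ → X} {x : X}

theorem tendsto_partialMetricG_of_tendsto
    (hpair : Tendsto (fun nm : ℕ × ℕ => p (s nm.1) (s nm.2)) atTop (𝓝 (p x x)))
    (hself : Tendsto (fun n => p (s n) (s n)) atTop (𝓝 (p x x)))
    (hleft : Tendsto (fun n => p x (s n)) atTop (𝓝 (p x x))) :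
    Tendsto (fun nm : ℕ × ℕ => partialMetricG p x (s nm.1) (s nm.2)) atTop (𝓝 0) := by
  have hsum := ((((hleft.comp_fst_atTop.add hpair).add hleft.comp_snd_atTop).sub_const
    (p x x)).sub hself.comp_fst_atTop).sub hself.comp_snd_atTop
  unfold partialMetricG
  convert hsum using 2
  ring

variable (hp : IsPartialMetric p)
include hp

theorem IsPartialMetric.tendsto_left_of_tendsto_partialMetricG
    (h : Tendsto (fun nm : ℕ × ℕ => partialMetricG p x (s nm.1) (s nm.2)) atTop (𝓝 0)) :
    Tendsto (fun n => p x (s n)) atTop (𝓝 (p x x)) := by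
  have hexcess : Tendsto (fun nm : ℕ × ℕ => p x (s nm.1) - p x x) atTop (𝓝 0) :=
    squeeze_zero (fun _ => sub_nonneg.2 (hp.self_le_left _ _))
      (fun _ => hp.sub_self_le_partialMetricG_left _ _ _) h
  simpa using (hexcess.comp tendsto_atTop_diagonal).add_const (p x x)

theorem IsPartialMetric.tendsto_self_of_tendsto_partialMetricG
    (h : Tendsto (fun nm : ℕ × ℕ => partialMetricG p x (s nm.1) (s nm.2)) atTop (𝓝 0)) :
    Tendsto (fun n => p (s n) (s n)) atTop (𝓝 (p x x)) := by
  have hdiag := ((hp.tendsto_left_of_tendsto_partialMetricG h).const_mul 2).sub_const (p x x)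
    |>.sub (h.comp tendsto_atTop_diagonal)
  simp only [Function.comp_def, partialMetricG_self_right] at hdiag
  convert hdiag using 2 <;> ring

theorem IsPartialMetric.tendsto_of_tendsto_partialMetricG
    (h : Tendsto (fun nm : ℕ × ℕ => partialMetricG p x (s nm.1) (s nm.2)) atTop (𝓝 0)) :
    Tendsto (fun nm : ℕ × ℕ => p (s nm.1) (s nm.2)) atTop (𝓝 (p x x)) := by
  have hexcess : Tendsto (fun nm : ℕ × ℕ => p (s nm.1) (s nm.2) - p (s nm.1) (s nm.1))
      atTop (𝓝 0) :=
    squeeze_zero (fun _ => sub_nonneg.2 (hp.self_le_left _ _))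
      (fun _ => hp.sub_self_le_partialMetricG_middle _ _ _) h
  simpa using hexcess.add (hp.tendsto_self_of_tendsto_partialMetricG h).comp_fst_atTop

end PartialMetricG

theorem stmt_3 {X : Type*} (p : X → X → ℝ) (hp : IsPartialMetric p)
    (Gp : X → X → X → ℝ)
    (hGp : ∀ x y z, Gp x y z = p x y + p y z + p x z - p x x - p y y - p z z)
    (s : ℕ → X) (x : X) :
    Tendsto (fun nm : ℕ × ℕ => Gp x (s nm.1) (s nm.2)) atTop (nhds 0) ↔
      (Tendsto (fun nm : ℕ × ℕ => p (s nm.1) (s nm.2)) atTop (nhds (p x x)) ∧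
       Tendsto (fun n => p (s n) (s n)) atTop (nhds (p x x)) ∧
       Tendsto (fun n => p x (s n)) atTop (nhds (p x x))) := by
  obtain rfl : Gp = partialMetricG p := funext₃ hGp
  exact ⟨fun h => ⟨hp.tendsto_of_tendsto_partialMetricG h,
    hp.tendsto_self_of_tendsto_partialMetricG h, hp.tendsto_left_of_tendsto_partialMetricG h⟩,
    fun ⟨hpair, hself, hleft⟩ => tendsto_partialMetricG_of_tendsto hpair hself hleft⟩
end

section
/- Let (X, GP) be a GP-metric space with associated G-metric G_GP. For a sequence {x_n} and x ∈ X: lim_{n,m→∞} G_GP(x, x_n, x_m) = 0 if and only if GP(x,x,x) = lim_{n→∞} GP(x, x_n, x_n) = lim_{n,m→∞} GP(x_n, x_m, x_m) = lim_{n→∞} GP(x_n, x_n, x_n). -/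
open Filter Topology

/- By GP2 and symmetry, GP(x,x,x) ≤ GP(x,y,y) ≥ GP(y,y,y), so for y = xₙ, z = xₘ
  G_GP(x,y,z) = (GP(x,y,y) - GP(x,x,x)) + (GP(x,z,z) - GP(z,z,z)) + (GP(y,z,z) - GP(y,y,y))
is a sum of three nonnegative terms. It tends to 0 iff each term does, and the three terms tend to 0
iff GP(x,xₙ,xₙ), GP(xₙ,xₙ,xₙ) and GP(xₙ,xₘ,xₘ) all tend to GP(x,x,x). -/

lemma tendsto_fst_atTop {α β : Type*} [Preorder α] [Preorder β] :
    Tendsto (Prod.fst : α × β → α) atTop atTop := by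
  rw [← prod_atTop_atTop_eq]
  exact tendsto_fst

lemma tendsto_snd_atTop {α β : Type*} [Preorder α] [Preorder β] :
    Tendsto (Prod.snd : α × β → β) atTop atTop := by
  rw [← prod_atTop_atTop_eq]
  exact tendsto_snd

lemma tendsto_add_add_nhds_zero_iff {a b : ℕ → ℝ} {c : ℕ × ℕ → ℝ}
    (ha : ∀ n, 0 ≤ a n) (hb : ∀ n, 0 ≤ b n) (hc : ∀ nm, 0 ≤ c nm) :
    Tendsto (fun nm : ℕ × ℕ => a nm.1 + b nm.2 + c nm) atTop (𝓝 0) ↔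
      Tendsto a atTop (𝓝 0) ∧ Tendsto b atTop (𝓝 0) ∧ Tendsto c atTop (𝓝 0) := by
  constructor
  · intro h
    have hdiag : Tendsto (fun n => a n + b n + c (n, n)) atTop (𝓝 0) :=
      h.comp tendsto_atTop_diagonal
    refine ⟨squeeze_zero ha (fun n => ?_) hdiag, squeeze_zero hb (fun n => ?_) hdiag,
      squeeze_zero hc (fun nm => ?_) h⟩
    · linarith [hb n, hc (n, n)]
    · linarith [ha n, hc (n, n)]
    · linarith [ha nm.1, hb nm.2]
  · rintro ⟨ha0, hb0, hc0⟩
    simpa using ((ha0.comp tendsto_fst_atTop).add (hb0.comp tendsto_snd_atTop)).add hc0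

namespace IsGPMetric

variable {X : Type*} {G : X → X → X → ℝ}

lemma self_le_left (hG : IsGPMetric G) (x y : X) : G x x x ≤ G x y y :=
  (hG.2.1 x y y).1.trans (hG.2.1 x y y).2

lemma self_le_right (hG : IsGPMetric G) (x y : X) : G y y y ≤ G x y y := by
  have hsymm : G y y x = G x y y := by rw [(hG.2.2.1 y y x).2, (hG.2.2.1 y x y).1]
  exact hsymm ▸ (hG.2.1 y x x).1

end IsGPMetric

theorem stmt_13 {X : Type*} (G : X → X → X → ℝ) (hG : IsGPMetric G)
    (GG : X → X → X → ℝ)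
    (hGG : ∀ x y z, GG x y z =
      G x y y + G x z z + G y z z - G x x x - G y y y - G z z z)
    (s : ℕ → X) (x : X) :
    Tendsto (fun nm : ℕ × ℕ => GG x (s nm.1) (s nm.2)) atTop (nhds 0) ↔
      (Tendsto (fun n => G x (s n) (s n)) atTop (nhds (G x x x)) ∧
       Tendsto (fun nm : ℕ × ℕ => G (s nm.1) (s nm.2) (s nm.2)) atTop (nhds (G x x x)) ∧
       Tendsto (fun n => G (s n) (s n) (s n)) atTop (nhds (G x x x))) := by
  have hsplit : (fun nm : ℕ × ℕ => GG x (s nm.1) (s nm.2)) = fun nm =>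
      (G x (s nm.1) (s nm.1) - G x x x) +
        (G x (s nm.2) (s nm.2) - G (s nm.2) (s nm.2) (s nm.2)) +
        (G (s nm.1) (s nm.2) (s nm.2) - G (s nm.1) (s nm.1) (s nm.1)) := by
    funext nm
    rw [hGG]
    ring
  rw [hsplit, tendsto_add_add_nhds_zero_iff (fun _ => sub_nonneg.2 (hG.self_le_left _ _))
    (fun _ => sub_nonneg.2 (hG.self_le_right _ _)) (fun _ => sub_nonneg.2 (hG.self_le_left _ _))]
  constructor
  · rintro ⟨hA, hC, hB⟩
    have h1 := tendsto_sub_nhds_zero_iff.1 hA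
    have h3 : Tendsto (fun n => G (s n) (s n) (s n)) atTop (𝓝 (G x x x)) := by
      simpa using h1.sub hC
    exact ⟨h1, by simpa using hB.add (h3.comp tendsto_fst_atTop), h3⟩
  · rintro ⟨h1, h2, h3⟩
    exact ⟨by simpa using h1.sub_const (G x x x), by simpa using h1.sub h3,
      by simpa using h2.sub (h3.comp tendsto_fst_atTop)⟩
end
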